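/- arXiv:2312.03220 — 6 statements merged into one kernel-verified Lean document; each statement's English description precedes it below -/
import Mathlib

section
/- The operator norm of λ_{SL₂(ℤ)}(S) + λ_{SL₂(ℤ)}(S⁻¹) + λ_{SL₂(ℤ)}(T) + λ_{SL₂(ℤ)}(T⁻¹) on ℓ²(SL₂(ℤ)) is strictly less than 4. -/
open Matrix
open scoped ENNReal

/-- A function on a group composed with left translation by `g⁻¹` is still ℓ². -/
lemma memℓp_translate {Γ : Type*} [Group Γ] (g : Γ) (f : lp (fun _ : Γ => ℂ) 2) :
    Memℓp (fun x => f (g⁻¹ * x)) 2 := by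
  apply memℓp_gen
  have hs : Summable fun x : Γ => ‖f x‖ ^ (2 : ℝ≥0∞).toReal :=
    (lp.memℓp f).summable (by norm_num)
  exact ((Equiv.mulLeft g⁻¹).summable_iff
    (f := fun x : Γ => ‖f x‖ ^ (2 : ℝ≥0∞).toReal)).2 hs

/-- The left regular representation of a group `Γ` on `ℓ²(Γ)`, as a bounded operator
for each group element: `(λ(g) f)(x) = f (g⁻¹ x)`. -/
noncomputable def lam (Γ : Type*) [Group Γ] (g : Γ) :
    lp (fun _ : Γ => ℂ) 2 →L[ℂ] lp (fun _ : Γ => ℂ) 2 := by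
  refine LinearMap.mkContinuous
    { toFun := fun f => ⟨fun x => f (g⁻¹ * x), memℓp_translate g f⟩
      map_add' := ?_
      map_smul' := ?_ } 1 ?_
  · intro f₁ f₂; ext x; simp <;> rfl
  · intro c f; ext x; simp
  · intro f
    have h₁ : ‖(⟨fun x => f (g⁻¹ * x), memℓp_translate g f⟩ : lp (fun _ : Γ => ℂ) 2)‖
        = ‖f‖ := by
      rw [lp.norm_eq_tsum_rpow (by norm_num) f,
        lp.norm_eq_tsum_rpow (by norm_num)]
      congr 1
      exact (Equiv.mulLeft g⁻¹).tsum_eq (f := fun x : Γ => ‖f x‖ ^ (2 : ℝ≥0∞).toReal)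
    exact le_of_eq (h₁.trans (one_mul ‖f‖).symm)

/-- The standard generator `S = [[0,-1],[1,0]]` of SL₂(ℤ). -/
def S : Matrix.SpecialLinearGroup (Fin 2) ℤ :=
  ⟨!![0, -1; 1, 0], by norm_num [Matrix.det_fin_two_of]⟩

/-- The standard generator `T = [[1,1],[0,1]]` of SL₂(ℤ). -/
def T : Matrix.SpecialLinearGroup (Fin 2) ℤ :=
  ⟨!![1, 1; 0, 1], by norm_num [Matrix.det_fin_two_of]⟩

/-!
For a unit vector `f`, put `u, v, w := λ(S⁻¹) f, λ(T) f, λ(T⁻¹) f`. Then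
`‖u + v + w‖² = 9 - (‖u - v‖² + ‖u - w‖² + ‖v - w‖²)`, and the three distances are the
displacements `‖λ(g) f - f‖` for `g = T⁻¹S⁻¹, TS⁻¹, T²`. The matrices `T² = [[1,2],[0,1]]` and
`R = [[1,0],[2,1]] = (TS⁻¹)⁻¹ (T⁻¹S⁻¹)` play ping-pong on the slope `a / c` of the first column
`(a, c)`, so they cannot both almost fix `f`: their displacements sum to at least `1 / 2`. Hence the
three distances sum to at least `1 / 2`, `‖u + v + w‖² ≤ 9 - 1 / 12`, and the operator norm is at
most `1 + √(107 / 12) < 4`.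
-/

theorem parallelogram_law_three_with_norm (𝕜 : Type*) {E : Type*} [RCLike 𝕜]
    [NormedAddCommGroup E] [InnerProductSpace 𝕜 E] (u v w : E) :
    ‖u + v + w‖ ^ 2 + (‖u - v‖ ^ 2 + ‖u - w‖ ^ 2 + ‖v - w‖ ^ 2)
      = 3 * (‖u‖ ^ 2 + ‖v‖ ^ 2 + ‖w‖ ^ 2) := by
  rw [norm_add_sq (𝕜 := 𝕜) (u + v) w, inner_add_left, map_add, norm_add_sq (𝕜 := 𝕜) u v,
    norm_sub_sq (𝕜 := 𝕜) u v, norm_sub_sq (𝕜 := 𝕜) u w, norm_sub_sq (𝕜 := 𝕜) v w]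
  ring

namespace lp

variable {ι E : Type*} [NormedAddCommGroup E] {p : ℝ≥0∞}

noncomputable def indicator (s : Set ι) (f : lp (fun _ : ι => E) p) : lp (fun _ : ι => E) p :=
  ⟨s.indicator f, (lp.memℓp f).mono' (norm_indicator_le_norm_self f)⟩

@[simp]
theorem coe_indicator (s : Set ι) (f : lp (fun _ : ι => E) p) :
    ⇑(indicator s f) = s.indicator f :=
  rfl

theorem indicator_sub (s : Set ι) (f g : lp (fun _ : ι => E) p) :
    indicator s (f - g) = indicator s f - indicator s g :=
  lp.ext (Set.indicator_sub s f g)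

theorem norm_indicator_mono (hp : p ≠ 0) {s t : Set ι} (hst : s ⊆ t)
    (f : lp (fun _ : ι => E) p) : ‖indicator s f‖ ≤ ‖indicator t f‖ :=
  lp.norm_mono hp (norm_indicator_le_of_subset hst f)

theorem norm_indicator_le (hp : p ≠ 0) (s : Set ι) (f : lp (fun _ : ι => E) p) :
    ‖indicator s f‖ ≤ ‖f‖ :=
  lp.norm_mono hp (norm_indicator_le_norm_self f)

theorem norm_indicator_le_add_norm_sub [Fact (1 ≤ p)] (s : Set ι) (f g : lp (fun _ : ι => E) p) :
    ‖indicator s g‖ ≤ ‖indicator s f‖ + ‖g - f‖ := by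
  have hp : p ≠ 0 := (zero_lt_one.trans_le Fact.out).ne'
  calc ‖indicator s g‖ = ‖indicator s f + indicator s (g - f)‖ := by
        rw [indicator_sub, add_sub_cancel]
    _ ≤ ‖indicator s f‖ + ‖indicator s (g - f)‖ := norm_add_le _ _
    _ ≤ ‖indicator s f‖ + ‖g - f‖ := by gcongr; exact norm_indicator_le hp s _

theorem summable_norm_sq (f : lp (fun _ : ι => E) 2) : Summable fun i => ‖f i‖ ^ 2 := by
  simpa using (lp.memℓp f).summable (by norm_num)

theorem norm_sq_eq_tsum (f : lp (fun _ : ι => E) 2) : ‖f‖ ^ 2 = ∑' i, ‖f i‖ ^ 2 := by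
  simpa using lp.norm_rpow_eq_tsum (by norm_num) f

theorem sq_norm_indicator_union {s t : Set ι} (hst : Disjoint s t) (f : lp (fun _ : ι => E) 2) :
    ‖indicator (s ∪ t) f‖ ^ 2 = ‖indicator s f‖ ^ 2 + ‖indicator t f‖ ^ 2 := by
  simp only [norm_sq_eq_tsum]
  rw [← (summable_norm_sq (indicator s f)).tsum_add (summable_norm_sq (indicator t f))]
  refine tsum_congr fun i => ?_
  rw [coe_indicator, Set.indicator_union_of_disjoint hst]
  by_cases hi : i ∈ s
  · simp [hi, Set.indicator_of_notMem (Set.disjoint_left.1 hst hi)]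
  · simp [hi]

theorem sq_norm_indicator_add_sq_norm_indicator_compl (s : Set ι) (f : lp (fun _ : ι => E) 2) :
    ‖indicator s f‖ ^ 2 + ‖indicator sᶜ f‖ ^ 2 = ‖f‖ ^ 2 := by
  rw [← sq_norm_indicator_union disjoint_compl_right, Set.union_compl_self]
  congr 2
  exact lp.ext (Set.indicator_univ f)

theorem sq_norm_indicator_sub_sq_norm_indicator_le (s : Set ι) (f g : lp (fun _ : ι => E) 2) :
    ‖indicator s g‖ ^ 2 - ‖indicator s f‖ ^ 2 ≤ ‖g - f‖ * (‖g‖ + ‖f‖) := by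
  have hg := norm_indicator_le two_ne_zero s g
  have hf := norm_indicator_le two_ne_zero s f
  have htri := norm_indicator_le_add_norm_sub s f g
  nlinarith [norm_nonneg (indicator s f), norm_nonneg (indicator s g), norm_nonneg (g - f)]

end lp

section RegularRepresentation

variable {Γ : Type*} [Group Γ]

@[simp]
theorem lam_apply (g : Γ) (f : lp (fun _ : Γ => ℂ) 2) (x : Γ) : lam Γ g f x = f (g⁻¹ * x) :=
  rfl

@[simp]
theorem lam_one (f : lp (fun _ : Γ => ℂ) 2) : lam Γ 1 f = f :=
  lp.ext <| funext fun x => by simp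

theorem lam_lam (g h : Γ) (f : lp (fun _ : Γ => ℂ) 2) : lam Γ g (lam Γ h f) = lam Γ (g * h) f :=
  lp.ext <| funext fun x => by simp [mul_assoc]

theorem norm_lam (g : Γ) (f : lp (fun _ : Γ => ℂ) 2) : ‖lam Γ g f‖ = ‖f‖ := by
  have hle : ∀ (g : Γ) (f : lp (fun _ : Γ => ℂ) 2), ‖lam Γ g f‖ ≤ ‖f‖ := fun g f => by
    simpa using (lam Γ g).le_of_opNorm_le (LinearMap.mkContinuous_norm_le _ zero_le_one _) f
  refine (hle g f).antisymm ?_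
  calc ‖f‖ = ‖lam Γ g⁻¹ (lam Γ g f)‖ := by rw [lam_lam, inv_mul_cancel, lam_one]
    _ ≤ ‖lam Γ g f‖ := hle _ _

theorem norm_lam_sub_lam (g h : Γ) (f : lp (fun _ : Γ => ℂ) 2) :
    ‖lam Γ g f - lam Γ h f‖ = ‖lam Γ (h⁻¹ * g) f - f‖ := by
  rw [← norm_lam h⁻¹, map_sub, lam_lam, lam_lam, inv_mul_cancel, lam_one]

theorem norm_lam_inv_sub (g : Γ) (f : lp (fun _ : Γ => ℂ) 2) :
    ‖lam Γ g⁻¹ f - f‖ = ‖lam Γ g f - f‖ := by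
  rw [← norm_lam g, map_sub, lam_lam, mul_inv_cancel, lam_one, norm_sub_rev]

theorem norm_lam_mul_sub_le (g h : Γ) (f : lp (fun _ : Γ => ℂ) 2) :
    ‖lam Γ (g * h) f - f‖ ≤ ‖lam Γ g f - f‖ + ‖lam Γ h f - f‖ := by
  calc ‖lam Γ (g * h) f - f‖ ≤ ‖lam Γ (g * h) f - lam Γ g f‖ + ‖lam Γ g f - f‖ :=
        norm_sub_le_norm_sub_add_norm_sub _ _ _
    _ = ‖lam Γ h f - f‖ + ‖lam Γ g f - f‖ := by rw [norm_lam_sub_lam, inv_mul_cancel_left]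
    _ = _ := add_comm _ _

theorem indicator_lam (s : Set Γ) (g : Γ) (f : lp (fun _ : Γ => ℂ) 2) :
    lp.indicator s (lam Γ g f) = lam Γ g (lp.indicator ((g * ·) ⁻¹' s) f) :=
  lp.ext <| funext fun x => by by_cases hx : x ∈ s <;> simp [hx]

theorem sq_norm_le_of_mapsTo_compl {s s' : Set Γ} {p : Γ}
    (hp : Set.MapsTo (p * ·) s'ᶜ s) (f : lp (fun _ : Γ => ℂ) 2) :
    ‖f‖ ^ 2 ≤ ‖lp.indicator s f‖ ^ 2 + ‖lp.indicator s' f‖ ^ 2 + 2 * ‖f‖ * ‖lam Γ p f - f‖ := by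
  have hsplit := lp.sq_norm_indicator_add_sq_norm_indicator_compl s' f
  have hcompl : ‖lp.indicator s'ᶜ f‖ ≤ ‖lp.indicator s (lam Γ p f)‖ := by
    rw [indicator_lam, norm_lam]
    exact lp.norm_indicator_mono two_ne_zero hp f
  have htransport := lp.sq_norm_indicator_sub_sq_norm_indicator_le s f (lam Γ p f)
  rw [norm_lam] at htransport
  nlinarith [pow_le_pow_left₀ (norm_nonneg _) hcompl 2]

end RegularRepresentation

open MatrixGroups

def R : SL(2, ℤ) := ⟨!![1, 0; 2, 1], by norm_num [Matrix.det_fin_two_of]⟩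

theorem coe_S : (S : Matrix (Fin 2) (Fin 2) ℤ) = !![0, -1; 1, 0] := rfl

theorem coe_T : (T : Matrix (Fin 2) (Fin 2) ℤ) = !![1, 1; 0, 1] := rfl

theorem coe_R : (R : Matrix (Fin 2) (Fin 2) ℤ) = !![1, 0; 2, 1] := rfl

theorem R_eq : R = (T * S⁻¹)⁻¹ * (T⁻¹ * S⁻¹) := by
  ext : 1
  simp [coe_S, coe_T, coe_R, Matrix.SpecialLinearGroup.coe_inv, Matrix.adjugate_fin_two]

/- For the first column `(a, c)` of `g`, these sets are where `a / c` lies in `[1, ∞]`,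
`(-∞, -1)`, `[0, 1)` and `[-1, 0)`: the classical ping-pong partition of `ℙ¹(ℚ)` for
`T * T` and `R`. -/
def slopeGeOne : Set SL(2, ℤ) := {g | g 1 0 ^ 2 ≤ g 0 0 * g 1 0}

def slopeLtNegOne : Set SL(2, ℤ) := {g | g 0 0 * g 1 0 < -g 1 0 ^ 2}

def slopeIcoZeroOne : Set SL(2, ℤ) := {g | 0 ≤ g 0 0 * g 1 0 ∧ g 0 0 * g 1 0 < g 1 0 ^ 2}

def slopeIcoNegOneZero : Set SL(2, ℤ) := {g | -g 1 0 ^ 2 ≤ g 0 0 * g 1 0 ∧ g 0 0 * g 1 0 < 0}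

theorem first_column_ne_zero (g : SL(2, ℤ)) : g 0 0 ≠ 0 ∨ g 1 0 ≠ 0 := by
  have hdet := g.det_coe
  rw [Matrix.det_fin_two] at hdet
  by_contra! h
  simp [h] at hdet

theorem T_mul_T_mul_apply_zero_zero (g : SL(2, ℤ)) : (T * T * g) 0 0 = g 0 0 + 2 * g 1 0 := by
  simp [coe_T, Matrix.mul_apply, Fin.sum_univ_two]

theorem T_mul_T_mul_apply_one_zero (g : SL(2, ℤ)) : (T * T * g) 1 0 = g 1 0 := by
  simp [coe_T, Matrix.mul_apply, Fin.sum_univ_two]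

theorem R_mul_apply_zero_zero (g : SL(2, ℤ)) : (R * g) 0 0 = g 0 0 := by
  simp [coe_R, Matrix.mul_apply, Fin.sum_univ_two]

theorem R_mul_apply_one_zero (g : SL(2, ℤ)) : (R * g) 1 0 = 2 * g 0 0 + g 1 0 := by
  simp [coe_R, Matrix.mul_apply, Fin.sum_univ_two]

theorem mapsTo_T_mul_T : Set.MapsTo (T * T * ·) slopeLtNegOneᶜ slopeGeOne := by
  intro g hg
  simp only [Set.mem_compl_iff, slopeLtNegOne, slopeGeOne, Set.mem_ofPred_eq, not_lt] at hg ⊢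
  rw [T_mul_T_mul_apply_zero_zero, T_mul_T_mul_apply_one_zero]
  linarith

theorem mapsTo_R : Set.MapsTo (R * ·) slopeIcoNegOneZeroᶜ slopeIcoZeroOne := by
  intro g hg
  simp only [Set.mem_compl_iff, slopeIcoNegOneZero, slopeIcoZeroOne, Set.mem_ofPred_eq,
    not_and_or, not_le, not_lt] at hg ⊢
  rw [R_mul_apply_zero_zero, R_mul_apply_one_zero]
  set a := g 0 0
  set c := g 1 0
  have hac : 0 < a ^ 2 + c ^ 2 := by
    rcases first_column_ne_zero g with h | h <;> positivity
  rcases hg with h | h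
  · have hpos : 0 < a * (a + c) := by nlinarith
    constructor <;> nlinarith
  · constructor <;> nlinarith

theorem sum_sq_norm_indicator_slope_le (f : lp (fun _ : SL(2, ℤ) => ℂ) 2) :
    ‖lp.indicator slopeGeOne f‖ ^ 2 + ‖lp.indicator slopeLtNegOne f‖ ^ 2
      + ‖lp.indicator slopeIcoZeroOne f‖ ^ 2 + ‖lp.indicator slopeIcoNegOneZero f‖ ^ 2
      ≤ ‖f‖ ^ 2 := by
  have h₁ : Disjoint slopeGeOne slopeLtNegOne := by
    refine Set.disjoint_left.2 fun g h₁ h₂ => ?_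
    simp only [slopeGeOne, slopeLtNegOne, Set.mem_ofPred_eq] at h₁ h₂
    nlinarith [sq_nonneg (g 1 0)]
  have h₂ : Disjoint (slopeGeOne ∪ slopeLtNegOne) slopeIcoZeroOne := by
    refine Set.disjoint_left.2 fun g h₁ h₂ => ?_
    simp only [slopeGeOne, slopeLtNegOne, slopeIcoZeroOne, Set.mem_union, Set.mem_ofPred_eq]
      at h₁ h₂
    rcases h₁ with h₁ | h₁ <;> nlinarith [sq_nonneg (g 1 0)]
  have h₃ : Disjoint (slopeGeOne ∪ slopeLtNegOne ∪ slopeIcoZeroOne) slopeIcoNegOneZero := by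
    refine Set.disjoint_left.2 fun g h₁ h₂ => ?_
    simp only [slopeGeOne, slopeLtNegOne, slopeIcoZeroOne, slopeIcoNegOneZero, Set.mem_union,
      Set.mem_ofPred_eq] at h₁ h₂
    rcases h₁ with (h₁ | h₁) | h₁ <;> nlinarith [sq_nonneg (g 1 0)]
  rw [← lp.sq_norm_indicator_union h₁, ← lp.sq_norm_indicator_union h₂,
    ← lp.sq_norm_indicator_union h₃]
  exact pow_le_pow_left₀ (norm_nonneg _) (lp.norm_indicator_le two_ne_zero _ f) 2

theorem one_le_two_mul_norm_lam_T_mul_T_sub_add_norm_lam_R_sub (f : lp (fun _ : SL(2, ℤ) => ℂ) 2)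
    (hf : ‖f‖ = 1) :
    1 ≤ 2 * (‖lam _ (T * T) f - f‖ + ‖lam _ R f - f‖) := by
  have hT := sq_norm_le_of_mapsTo_compl mapsTo_T_mul_T f
  have hR := sq_norm_le_of_mapsTo_compl mapsTo_R f
  have hsum := sum_sq_norm_indicator_slope_le f
  rw [hf] at hT hR hsum
  linarith

theorem sq_norm_lam_add_lam_add_lam_le (f : lp (fun _ : SL(2, ℤ) => ℂ) 2) (hf : ‖f‖ = 1) :
    ‖lam _ S⁻¹ f + lam _ T f + lam _ T⁻¹ f‖ ^ 2 ≤ 107 / 12 := by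
  have hR : ‖lam _ R f - f‖ ≤ ‖lam _ (T * S⁻¹) f - f‖ + ‖lam _ (T⁻¹ * S⁻¹) f - f‖ := by
    rw [R_eq, ← norm_lam_inv_sub (T * S⁻¹)]
    exact norm_lam_mul_sub_le _ _ f
  have hdist : 1 ≤ 2 * (‖lam _ T f - lam _ T⁻¹ f‖ + ‖lam _ S⁻¹ f - lam _ T f‖
      + ‖lam _ S⁻¹ f - lam _ T⁻¹ f‖) := by
    rw [norm_lam_sub_lam, norm_lam_sub_lam, norm_lam_sub_lam, inv_inv]
    linarith [one_le_two_mul_norm_lam_T_mul_T_sub_add_norm_lam_R_sub f hf]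
  have hlaw := parallelogram_law_three_with_norm ℂ (lam _ S⁻¹ f) (lam _ T f) (lam _ T⁻¹ f)
  simp only [norm_lam, hf] at hlaw
  nlinarith [sq_nonneg (‖lam _ T f - lam _ T⁻¹ f‖ - ‖lam _ S⁻¹ f - lam _ T f‖),
    sq_nonneg (‖lam _ T f - lam _ T⁻¹ f‖ - ‖lam _ S⁻¹ f - lam _ T⁻¹ f‖),
    sq_nonneg (‖lam _ S⁻¹ f - lam _ T f‖ - ‖lam _ S⁻¹ f - lam _ T⁻¹ f‖)]

theorem stmt4 :
    ‖lam (Matrix.SpecialLinearGroup (Fin 2) ℤ) S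
      + lam (Matrix.SpecialLinearGroup (Fin 2) ℤ) S⁻¹
      + lam (Matrix.SpecialLinearGroup (Fin 2) ℤ) T
      + lam (Matrix.SpecialLinearGroup (Fin 2) ℤ) T⁻¹‖ < 4 := by
  have hbound : ‖lam _ S + lam _ S⁻¹ + lam _ T + lam _ T⁻¹‖ ≤ 1 + √(107 / 12) := by
    refine ContinuousLinearMap.opNorm_le_of_unit_norm (by positivity) fun f hf => ?_
    calc ‖(lam _ S + lam _ S⁻¹ + lam _ T + lam _ T⁻¹) f‖
        = ‖lam _ S f + (lam _ S⁻¹ f + lam _ T f + lam _ T⁻¹ f)‖ := by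
          simp only [_root_.add_apply, add_assoc]
      _ ≤ ‖lam _ S f‖ + ‖lam _ S⁻¹ f + lam _ T f + lam _ T⁻¹ f‖ := norm_add_le _ _
      _ ≤ 1 + √(107 / 12) := by
          rw [norm_lam, hf]
          gcongr
          exact Real.le_sqrt_of_sq_le (sq_norm_lam_add_lam_add_lam_le f hf)
  have hsqrt : √(107 / 12) < 3 := (Real.sqrt_lt' (by norm_num)).2 (by norm_num)
  linarith
end

section
/- Let p be a prime and r ≥ 2. The kernel of the reduction homomorphism SL₄(ℤ/p^rℤ) → SL₄(ℤ/p^{r-1}ℤ) equals the subgroup of SL₄(ℤ/p^rℤ) generated by all conjugates g(I + p^{r-1}E_{ij})g⁻¹ with g ∈ SL₄(ℤ/p^rℤ) and 1 ≤ i ≠ j ≤ 4. -/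
/-!
Put `ε = p^(r-1)`, so that `ε² = 0` in `ℤ/p^r`. The kernel of reduction consists of the
matrices `1 + ε A` of determinant one, and `det (1 + ε A) = 1 + ε tr A`. Since
`(1 + ε A)(1 + ε B) = 1 + ε (A + B)`, the matrices `A` with `1 + ε A` in the normal subgroup `H`
generated by the elementary matrices form an additive group stable under conjugation. It contains
`c E_ij` for `i ≠ j` (powers of the generators), hence, conjugating by `1 + E_ji`, the differences
`c (E_jj - E_ii)`, hence every `A` with `ε tr A = 0`. So the whole kernel lies in `H`.
-/

open Matrix

/-- The elementary matrix `I + p^(r-1) E i j` as an element of `SL₄(ℤ/p^r)`, for `i ≠ j`. -/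
def elem (p r : ℕ) (i j : Fin 4) (h : i ≠ j) :
    Matrix.SpecialLinearGroup (Fin 4) (ZMod (p ^ r)) :=
  ⟨1 + Matrix.single i j ((p : ZMod (p ^ r)) ^ (r - 1)), by
    simpa [Matrix.transvection] using
      Matrix.det_transvection_of_ne i j h ((p : ZMod (p ^ r)) ^ (r - 1))⟩

namespace Matrix

variable {n R : Type*} [Fintype n] [DecidableEq n] [CommRing R] {ε : R}

theorem one_add_smul_mul_one_add_smul (hε : ε * ε = 0) (A B : Matrix n n R) :
    (1 + ε • A) * (1 + ε • B) = 1 + ε • (A + B) := by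
  rw [add_mul, mul_add, mul_add, smul_mul_smul_comm, hε, zero_smul, one_mul, one_mul, mul_one,
    add_zero, smul_add]
  abel

theorem det_one_add_smul_of_mul_self_eq_zero (hε : ε * ε = 0) (A : Matrix n n R) :
    (1 + ε • A).det = 1 + ε * A.trace := by
  rw [det_one_add_smul, sq, hε, mul_zero, add_zero, mul_comm]

namespace SpecialLinearGroup

theorem transvection_zsmul {i j : n} (hij : i ≠ j) (k : ℤ) (b : R) :
    transvection hij (k • b) = transvection hij b ^ k := by
  induction k using Int.induction_on with
  | zero => simp
  | succ k ih => rw [add_smul, one_smul, transvection_add, ih, _root_.zpow_add_one]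
  | pred k ih =>
    rw [sub_smul, one_smul, sub_eq_add_neg, transvection_add, ih, ← transvection_inv,
      _root_.zpow_sub_one]

def tangentAddSubgroup (H : Subgroup (SpecialLinearGroup n R)) (hε : ε * ε = 0) :
    AddSubgroup (Matrix n n R) where
  carrier := {A | ∃ u ∈ H, (u : Matrix n n R) = 1 + ε • A}
  zero_mem' := ⟨1, H.one_mem, by simp⟩
  add_mem' := by
    rintro A B ⟨u, hu, hu'⟩ ⟨v, hv, hv'⟩
    exact ⟨u * v, H.mul_mem hu hv, by rw [coe_mul, hu', hv', one_add_smul_mul_one_add_smul hε]⟩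
  neg_mem' := by
    rintro A ⟨u, hu, hu'⟩
    refine ⟨u⁻¹, H.inv_mem hu, ?_⟩
    have hv : (u : Matrix n n R) * (1 + ε • -A) = 1 := by
      rw [hu', one_add_smul_mul_one_add_smul hε, add_neg_cancel, smul_zero, add_zero]
    calc ((u⁻¹ : SpecialLinearGroup n R) : Matrix n n R)
        = ((u⁻¹ : SpecialLinearGroup n R) : Matrix n n R) * u * (1 + ε • -A) := by
          rw [mul_assoc, hv, mul_one]
      _ = 1 + ε • -A := by rw [← coe_mul, inv_mul_cancel, coe_one, one_mul]

variable {H : Subgroup (SpecialLinearGroup n R)} {hε : ε * ε = 0}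

theorem mem_of_mem_tangentAddSubgroup {A : Matrix n n R} (hA : A ∈ tangentAddSubgroup H hε)
    {M : SpecialLinearGroup n R} (hM : (M : Matrix n n R) = 1 + ε • A) : M ∈ H := by
  obtain ⟨u, hu, hu'⟩ := hA
  rwa [Subtype.ext (hu'.trans hM.symm)] at hu

theorem mem_tangentAddSubgroup_of_smul_eq_zero {A : Matrix n n R} (hA : ε • A = 0) :
    A ∈ tangentAddSubgroup H hε :=
  ⟨1, H.one_mem, by rw [hA, add_zero, coe_one]⟩

theorem single_mem_tangentAddSubgroup_iff {i j : n} (hij : i ≠ j) (c : R) :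
    single i j c ∈ tangentAddSubgroup H hε ↔ transvection hij (ε * c) ∈ H := by
  have hcoe : (transvection hij (ε * c) : Matrix n n R) = 1 + ε • single i j c := by
    rw [transvection_coe, smul_single, smul_eq_mul]
  exact ⟨fun h ↦ mem_of_mem_tangentAddSubgroup h hcoe, fun h ↦ ⟨_, h, hcoe⟩⟩

theorem conj_mem_tangentAddSubgroup [H.Normal] (g : SpecialLinearGroup n R) {A : Matrix n n R}
    (hA : A ∈ tangentAddSubgroup H hε) :
    (g : Matrix n n R) * A * ((g⁻¹ : SpecialLinearGroup n R) : Matrix n n R) ∈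
      tangentAddSubgroup H hε := by
  obtain ⟨u, hu, hu'⟩ := hA
  refine ⟨g * u * g⁻¹, ‹H.Normal›.conj_mem u hu g, ?_⟩
  rw [coe_mul, coe_mul, hu', mul_add, mul_one, add_mul, ← coe_mul, mul_inv_cancel, coe_one,
    mul_smul_comm, smul_mul_assoc]

section OffDiagonal

variable (hoff : ∀ i j : n, i ≠ j → ∀ c : R, single i j c ∈ tangentAddSubgroup H hε)
include hoff

theorem single_sub_single_mem_tangentAddSubgroup [H.Normal] {i j : n} (hij : i ≠ j) (c : R) :
    single j j c - single i i c ∈ tangentAddSubgroup H hε := by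
  have hconj : (transvection hij.symm (1 : R) : Matrix n n R) * single i j c *
      ((transvection hij.symm (1 : R))⁻¹ : SpecialLinearGroup n R) =
      single i j c + (single j j c - single i i c) - single j i c := by
    simp only [transvection_inv, transvection_coe, mul_add, add_mul, mul_one, one_mul,
      single_mul_single_same, mul_neg, ← single_neg]
    abel
  have h := sub_mem (conj_mem_tangentAddSubgroup (transvection hij.symm 1) (hoff i j hij c))
    (sub_mem (hoff i j hij c) (hoff j i hij.symm c))
  rwa [hconj, sub_sub_sub_comm, add_sub_cancel_left, sub_self, sub_zero] at h

theorem diagonal_mem_tangentAddSubgroup [H.Normal] (d : n → R) (hd : ε * ∑ i, d i = 0) :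
    diagonal d ∈ tangentAddSubgroup H hε := by
  rcases isEmpty_or_nonempty n with hn | ⟨⟨i₀⟩⟩
  · rw [Subsingleton.elim (diagonal d) 0]
    exact zero_mem _
  have hsplit : diagonal d =
      ∑ i, (single i i (d i) - single i₀ i₀ (d i)) + single i₀ i₀ (∑ i, d i) := by
    rw [Finset.sum_sub_distrib, sum_single_eq_diagonal, ← singleAddMonoidHom_apply, map_sum]
    simp only [singleAddMonoidHom_apply, sub_add_cancel]
  rw [hsplit]
  refine add_mem (sum_mem fun i _ ↦ ?_)
    (mem_tangentAddSubgroup_of_smul_eq_zero (by rw [smul_single, smul_eq_mul, hd, single_zero]))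
  rcases eq_or_ne i₀ i with rfl | hi
  · rw [sub_self]
    exact zero_mem _
  · exact single_sub_single_mem_tangentAddSubgroup hoff hi _

theorem mem_tangentAddSubgroup_of_mul_trace_eq_zero [H.Normal] {A : Matrix n n R}
    (hA : ε * A.trace = 0) : A ∈ tangentAddSubgroup H hε := by
  have hoffdiag : A - diagonal A.diag ∈ tangentAddSubgroup H hε := by
    rw [matrix_eq_sum_single (A - diagonal A.diag)]
    refine sum_mem fun i _ ↦ sum_mem fun j _ ↦ ?_
    rcases eq_or_ne i j with rfl | hij
    · rw [sub_apply, diagonal_apply_eq, diag_apply, sub_self, single_zero]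
      exact zero_mem _
    · exact hoff i j hij _
  have h := add_mem hoffdiag (diagonal_mem_tangentAddSubgroup hoff A.diag hA)
  rwa [sub_add_cancel] at h

end OffDiagonal

theorem mem_of_coe_eq_one_add_smul [H.Normal] (hε : ε * ε = 0)
    (htr : ∀ (i j : n) (hij : i ≠ j) (c : R), transvection hij (ε * c) ∈ H)
    {M : SpecialLinearGroup n R} {A : Matrix n n R} (hM : (M : Matrix n n R) = 1 + ε • A) :
    M ∈ H := by
  have htrace : ε * A.trace = 0 := by
    have hdet := M.prop
    rwa [hM, det_one_add_smul_of_mul_self_eq_zero hε, add_eq_left] at hdet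
  have hoff : ∀ i j : n, i ≠ j → ∀ c : R, single i j c ∈ tangentAddSubgroup H hε :=
    fun i j hij c ↦ (single_mem_tangentAddSubgroup_iff hij c).2 (htr i j hij c)
  exact mem_of_mem_tangentAddSubgroup (mem_tangentAddSubgroup_of_mul_trace_eq_zero hoff htrace) hM

end SpecialLinearGroup
end Matrix

namespace ZMod

theorem exists_eq_natCast_mul_of_castHom_eq_zero {m N : ℕ} (h : m ∣ N) {x : ZMod N}
    (hx : castHom h (ZMod m) x = 0) : ∃ y, x = m * y := by
  rw [castHom_apply, ← intCast_cast, intCast_zmod_eq_zero_iff_dvd] at hx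
  obtain ⟨c, hc⟩ := hx
  exact ⟨c, by rw [← intCast_zmod_cast x, hc]; push_cast; rfl⟩

end ZMod

namespace Matrix.SpecialLinearGroup

variable {n : Type*} [Fintype n] [DecidableEq n]

theorem mem_ker_map_castHom_iff {m N : ℕ} (h : m ∣ N) {M : SpecialLinearGroup n (ZMod N)} :
    M ∈ (map (ZMod.castHom h (ZMod m))).ker ↔
      ∃ A : Matrix n n (ZMod N), (M : Matrix n n (ZMod N)) = 1 + (m : ZMod N) • A := by
  rw [MonoidHom.mem_ker, SpecialLinearGroup.ext_iff, Matrix.ext_iff, map_apply_coe, coe_one,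
    ← sub_eq_zero, ← map_one (ZMod.castHom h (ZMod m)).mapMatrix, ← map_sub, ← Matrix.ext_iff]
  simp only [RingHom.mapMatrix_apply, map_apply, zero_apply]
  constructor
  · intro hM
    choose A hA using fun i j ↦ ZMod.exists_eq_natCast_mul_of_castHom_eq_zero h (hM i j)
    refine ⟨of A, ?_⟩
    ext i j
    rw [add_apply, smul_apply, of_apply, smul_eq_mul, ← hA, sub_apply, add_sub_cancel]
  · rintro ⟨A, hA⟩ i j
    rw [hA, add_sub_cancel_left, smul_apply, smul_eq_mul, map_mul, map_natCast, ZMod.natCast_self,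
      zero_mul]

theorem transvection_mul_mem {N : ℕ} {H : Subgroup (SpecialLinearGroup n (ZMod N))} {i j : n}
    (hij : i ≠ j) {b : ZMod N} (hb : transvection hij b ∈ H) (c : ZMod N) :
    transvection hij (b * c) ∈ H := by
  rw [← ZMod.intCast_zmod_cast c, mul_comm, ← zsmul_eq_mul, transvection_zsmul]
  exact zpow_mem hb _

end Matrix.SpecialLinearGroup

theorem ZMod.natCast_pow_sub_one_mul_self_eq_zero (p : ℕ) {r : ℕ} (hr : 2 ≤ r) :
    (p : ZMod (p ^ r)) ^ (r - 1) * (p : ZMod (p ^ r)) ^ (r - 1) = 0 := by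
  rw [← pow_add, show r - 1 + (r - 1) = r + (r - 2) by omega, pow_add, ← Nat.cast_pow,
    ZMod.natCast_self, zero_mul]

theorem elem_eq_transvection (p r : ℕ) {i j : Fin 4} (h : i ≠ j) :
    elem p r i j h = SpecialLinearGroup.transvection h ((p : ZMod (p ^ r)) ^ (r - 1)) :=
  rfl

theorem closure_conj_elem_eq_normalClosure (p r : ℕ) :
    Subgroup.closure {x | ∃ g i j h, x = g * elem p r i j h * g⁻¹} =
      Subgroup.normalClosure {x | ∃ i j h, x = elem p r i j h} := by
  rw [Subgroup.normalClosure]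
  congr 1
  ext x
  simp only [Group.mem_conjugatesOfSet_iff, isConj_iff, Set.mem_ofPred_eq]
  constructor
  · rintro ⟨g, i, j, h, rfl⟩
    exact ⟨_, ⟨i, j, h, rfl⟩, g, rfl⟩
  · rintro ⟨_, ⟨i, j, h, rfl⟩, g, rfl⟩
    exact ⟨g, i, j, h, rfl⟩

theorem stmt8 (p : ℕ) (r : ℕ) (hr : 2 ≤ r) :
    (Matrix.SpecialLinearGroup.map (n := Fin 4)
        (ZMod.castHom (pow_dvd_pow p (by omega : r - 1 ≤ r)) (ZMod (p ^ (r - 1))))).ker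
    = Subgroup.closure
        {x : Matrix.SpecialLinearGroup (Fin 4) (ZMod (p ^ r)) |
          ∃ (g : Matrix.SpecialLinearGroup (Fin 4) (ZMod (p ^ r))) (i j : Fin 4)
            (h : i ≠ j), x = g * elem p r i j h * g⁻¹} := by
  rw [closure_conj_elem_eq_normalClosure]
  refine le_antisymm (fun M hM ↦ ?_) (Subgroup.normalClosure_le_normal ?_)
  · rw [SpecialLinearGroup.mem_ker_map_castHom_iff, Nat.cast_pow] at hM
    obtain ⟨A, hA⟩ := hM
    refine SpecialLinearGroup.mem_of_coe_eq_one_add_smul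
      (ZMod.natCast_pow_sub_one_mul_self_eq_zero p hr) (fun i j hij c ↦ ?_) hA
    refine SpecialLinearGroup.transvection_mul_mem hij ?_ c
    exact Subgroup.subset_normalClosure ⟨i, j, hij, elem_eq_transvection p r hij⟩
  · rintro _ ⟨i, j, hij, rfl⟩
    rw [SetLike.mem_coe, SpecialLinearGroup.mem_ker_map_castHom_iff, Nat.cast_pow]
    exact ⟨single i j 1, by rw [elem_eq_transvection, SpecialLinearGroup.transvection_coe,
      smul_single, smul_eq_mul, mul_one]⟩
end

section
/- Let p be a prime, r ≥ 1, and let φ be a finite-dimensional complex representation of SL₄(ℤ/p^rℤ) on a nonzero space which is new, i.e. the kernel of the reduction homomorphism SL₄(ℤ/p^rℤ) → SL₄(ℤ/p^{r-1}ℤ) is not contained in the kernel of φ. If φ is irreducible, then for every pair 1 ≤ i ≠ j ≤ 4, φ(I + p^{r-1}E_{ij}) is not the identity. -/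
open Matrix

/-!
If `φ` killed `x_{ij}(q)` with `q = p^(r-1)`, then, `ker φ` being normal and
`⁅x_{ij}(a), x_{jk}(b)⁆ = x_{ik}(ab)`, it would kill every `x_{ab}(qc)`; moving the indices one at a
time needs a third index, hence `n ≥ 3`. These elementary matrices generate the kernel of reduction
modulo `q`. For `r = 1` that kernel is `SLₙ(𝔽_p)`, generated by transvections. Otherwise `q² = 0`,
so `1 + qB ↦ B` turns products into sums, and `det (1 + qB) = 1 + q tr B` lets one replace `B` by
the traceless `B - (tr B) E_{a₀a₀}`: a sum of matrices `c E_{ab}` and `c (E_{aa} - E_{bb})`,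
realised by `x_{ab}(qc)` and by a commutator of elementary matrices. So `φ` would kill the whole
kernel of reduction, contradicting newness.
-/

namespace Matrix.SpecialLinearGroup

open scoped commutatorElement

variable {ι R : Type*} [Fintype ι] [DecidableEq ι] [CommRing R]

theorem commutatorElement_transvection_transvection {i j k : ι} (hij : i ≠ j) (hjk : j ≠ k)
    (hik : i ≠ k) (a b : R) :
    ⁅transvection hij a, transvection hjk b⁆ = transvection hik (a * b) := by
  rw [commutatorElement_def, transvection_inv, transvection_inv]
  ext x y
  simp only [coe_mul, transvection_coe, mul_add, mul_one, add_mul, one_mul,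
    single_mul_single_same, ne_eq, hij.symm, not_false_eq_true, single_mul_single_of_ne, add_zero,
    hik.symm, mul_neg, hjk.symm, neg_mul, neg_neg, add_apply, single_apply]
  split_ifs <;> simp_all

theorem coe_commutatorElement_transvection_mul_transvection {a b : ι} (hab : a ≠ b) {e : R}
    (he : e * e = 0) :
    ((⁅transvection hab e, transvection hab.symm 1⁆ * transvection hab.symm (-e) :
      SpecialLinearGroup ι R) : Matrix ι ι R) = 1 + single a a e - single b b e := by
  rw [commutatorElement_def, transvection_inv, transvection_inv]
  simp only [coe_mul, transvection_coe, mul_add, add_mul, Matrix.one_mul,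
    Matrix.mul_one, single_mul_single_same, single_mul_single_of_ne _ _ _ _ hab,
    single_mul_single_of_ne _ _ _ _ hab.symm, add_zero]
  ext x y
  simp only [add_apply, sub_apply, single_apply, one_apply, @eq_comm _ a x, @eq_comm _ b x,
    @eq_comm _ a y, @eq_comm _ b y]
  by_cases hxa : x = a <;> by_cases hxb : x = b <;> by_cases hya : y = a <;>
    by_cases hyb : y = b <;>
    simp [hxa, hxb, hya, hyb, hab, hab.symm, @eq_comm _ a y, @eq_comm _ b y, he, sub_eq_add_neg]

theorem diag2n_decompose {K : Type*} [Field K] {i j : ι} (hij : i ≠ j) (c : K)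
    (hc : c ≠ 0) :
    diag2n hij c hc = transvection hij c * transvection hij.symm (-c⁻¹) * transvection hij c *
      transvection hij (-1) * transvection hij.symm 1 * transvection hij (-1) := by
  apply Subtype.ext
  simp only [diag2n_coe, coe_mul, transvection_coe, mul_add, add_mul, Matrix.one_mul,
    Matrix.mul_one, single_mul_single_same, single_mul_single_of_ne _ _ _ _ hij,
    single_mul_single_of_ne _ _ _ _ hij.symm, add_zero]
  ext x y
  simp only [add_apply, single_apply, one_apply, diagonal_apply, @eq_comm _ i x, @eq_comm _ j x,
    @eq_comm _ i y, @eq_comm _ j y]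
  by_cases hxi : x = i <;> by_cases hxj : x = j <;> by_cases hyi : y = i <;>
    by_cases hyj : y = j <;>
    simp [hxi, hxj, hyi, hyj, hij, hij.symm, hc, @eq_comm _ i y, @eq_comm _ j y]

theorem eq_top_of_forall_transvection_mem {K : Type*} [Field K] [Nontrivial ι]
    {N : Subgroup (SpecialLinearGroup ι K)}
    (h : ∀ (a b : ι) (hab : a ≠ b) (c : K), transvection hab c ∈ N) : N = ⊤ :=
  eq_top_iff.2 fun g _ ↦ diagonal_transvection_induction' (· ∈ N) g
    (fun a b hab c hc ↦ by
      rw [diag2n_decompose]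
      repeat' first | exact h _ _ _ _ | apply N.mul_mem)
    h (fun _ _ ↦ N.mul_mem)

variable {N : Subgroup (SpecialLinearGroup ι R)}

theorem transvection_mul_mem_of_transvection_mem_row [N.Normal] {i j k : ι} (hij : i ≠ j)
    (hjk : j ≠ k) (hik : i ≠ k) {q : R} (h : transvection hij q ∈ N) (c : R) :
    transvection hik (q * c) ∈ N := by
  rw [← commutatorElement_transvection_transvection hij hjk hik]
  exact Subgroup.commutator_le_left N ⊤ (Subgroup.commutator_mem_commutator h trivial)

theorem transvection_mul_mem_of_transvection_mem_col [N.Normal] {i j k : ι} (hki : k ≠ i)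
    (hij : i ≠ j) (hkj : k ≠ j) {q : R} (h : transvection hij q ∈ N) (c : R) :
    transvection hkj (q * c) ∈ N := by
  rw [mul_comm, ← commutatorElement_transvection_transvection hki hij hkj]
  exact Subgroup.commutator_le_right ⊤ N (Subgroup.commutator_mem_commutator trivial h)

theorem transvection_mul_mem_row [N.Normal] {i j : ι} (hij : i ≠ j) {q : R}
    (h : ∀ c, transvection hij (q * c) ∈ N) {k : ι} (hik : i ≠ k) (c : R) :
    transvection hik (q * c) ∈ N := by
  obtain rfl | hjk := eq_or_ne j k
  · exact h c
  · exact transvection_mul_mem_of_transvection_mem_row hij hjk hik (by simpa using h 1) c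

theorem transvection_mul_mem_col [N.Normal] {i j : ι} (hij : i ≠ j) {q : R}
    (h : ∀ c, transvection hij (q * c) ∈ N) {k : ι} (hkj : k ≠ j) (c : R) :
    transvection hkj (q * c) ∈ N := by
  obtain rfl | hki := eq_or_ne k i
  · exact h c
  · exact transvection_mul_mem_of_transvection_mem_col hki hij hkj (by simpa using h 1) c

theorem transvection_mul_mem_of_three_le_card [N.Normal] (hι : 3 ≤ Fintype.card ι) {i j : ι}
    (hij : i ≠ j) {q : R} (h : transvection hij q ∈ N) {a b : ι} (hab : a ≠ b) (c : R) :
    transvection hab (q * c) ∈ N := by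
  have hι' : 3 ≤ ENat.card ι := by simpa using hι
  obtain ⟨k, hki, hkj⟩ := ENat.exists_ne_ne_of_three_le hι' i j
  obtain ⟨l, hli, hla⟩ := ENat.exists_ne_ne_of_three_le hι' i a
  have hik := transvection_mul_mem_of_transvection_mem_row hij hkj.symm hki.symm h
  have hil := transvection_mul_mem_row hki.symm hik hli.symm
  have hal := transvection_mul_mem_col hli.symm hil hla.symm
  exact transvection_mul_mem_row hla.symm hal hab c

theorem one_add_smul_mul_one_add_smul {A : Type*} [Ring A] [Algebra R A] {q : R}
    (hq : q * q = 0) (x y : A) : (1 + q • x) * (1 + q • y) = 1 + q • (x + y) := by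
  rw [add_mul, mul_add, mul_add, smul_mul_smul_comm, hq, zero_smul, smul_add]
  simp only [one_mul, mul_one, add_zero]
  abel

variable (N) in
/-- Since `q * q = 0`, multiplying elements `1 + q • B` of `N` adds the `B`s. -/
def firstOrderPart {q : R} (hq : q * q = 0) : AddSubmonoid (Matrix ι ι R) where
  carrier := {B | ∃ g ∈ N, (g : Matrix ι ι R) = 1 + q • B}
  zero_mem' := ⟨1, N.one_mem, by simp⟩
  add_mem' := by
    rintro A B ⟨g, hg, hgA⟩ ⟨g', hg', hgB⟩
    exact ⟨g * g', N.mul_mem hg hg', by rw [coe_mul, hgA, hgB, one_add_smul_mul_one_add_smul hq]⟩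

section firstOrderPart

variable {q : R} (hq : q * q = 0)
  (hN : ∀ (a b : ι) (hab : a ≠ b) (c : R), transvection hab (q * c) ∈ N)

include hN in
theorem single_mem_firstOrderPart {a b : ι} (hab : a ≠ b) (c : R) :
    single a b c ∈ firstOrderPart N hq :=
  ⟨transvection hab (q * c), hN a b hab c, by rw [transvection_coe, smul_single, smul_eq_mul]⟩

include hN in
theorem single_sub_single_mem_firstOrderPart [N.Normal] {a b : ι} (hab : a ≠ b) (c : R) :
    single a a c - single b b c ∈ firstOrderPart N hq := by
  have hqc : q * c * (q * c) = 0 := by linear_combination c * c * hq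
  refine ⟨_, N.mul_mem ?_ ?_,
    (coe_commutatorElement_transvection_mul_transvection hab hqc).trans ?_⟩
  · exact Subgroup.commutator_le_left N ⊤
      (Subgroup.commutator_mem_commutator (hN a b hab c) trivial)
  · simpa using hN b a hab.symm (-c)
  · rw [smul_sub, smul_single, smul_single, smul_eq_mul, add_sub_assoc]

include hN in
theorem sub_single_trace_mem_firstOrderPart [N.Normal] (a₀ : ι) (B : Matrix ι ι R) :
    B - single a₀ a₀ (trace B) ∈ firstOrderPart N hq := by
  induction B using Matrix.induction_on' with
  | h_zero => simp [(firstOrderPart N hq).zero_mem]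
  | h_add B C hB hC =>
    convert (firstOrderPart N hq).add_mem hB hC using 1
    rw [trace_add, single_add]
    abel
  | h_std_basis a b c =>
    obtain rfl | hab := eq_or_ne a b
    · obtain rfl | ha := eq_or_ne a a₀
      · simp [trace_single_eq_same, (firstOrderPart N hq).zero_mem]
      · simpa using single_sub_single_mem_firstOrderPart hq hN ha c
    · simpa [trace_single_eq_of_ne _ _ _ hab] using single_mem_firstOrderPart hq hN hab c

include hq hN in
theorem mem_of_coe_eq_one_add_smul_s9 [N.Normal] {g : SpecialLinearGroup ι R} {B : Matrix ι ι R}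
    (hg : (g : Matrix ι ι R) = 1 + q • B) : g ∈ N := by
  rcases isEmpty_or_nonempty ι with hι | ⟨⟨a₀⟩⟩
  · rw [Subsingleton.elim g 1]
    exact N.one_mem
  have htrace : q * trace B = 0 := by
    have hdet := g.2
    rwa [hg, det_one_add_smul, sq, hq, mul_zero, add_zero, add_eq_left, mul_comm] at hdet
  obtain ⟨g', hg'N, hg'⟩ := sub_single_trace_mem_firstOrderPart hq hN a₀ B
  convert hg'N
  ext : 1
  rw [hg, hg', smul_sub, smul_single, smul_eq_mul, htrace, single_zero, sub_zero]

end firstOrderPart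

end Matrix.SpecialLinearGroup

theorem ZMod.exists_eq_mul_of_castHom_eq_zero {m n : ℕ} (h : m ∣ n) {x : ZMod n}
    (hx : ZMod.castHom h (ZMod m) x = 0) : ∃ c : ZMod n, x = m * c := by
  rw [← ZMod.intCast_zmod_cast x, map_intCast, ZMod.intCast_zmod_eq_zero_iff_dvd] at hx
  obtain ⟨c, hc⟩ := hx
  exact ⟨c, by rw [← ZMod.intCast_zmod_cast x, hc]; push_cast; rfl⟩

theorem Matrix.SpecialLinearGroup.exists_coe_eq_one_add_smul_of_mem_ker_map_castHom
    {ι : Type*} [Fintype ι] [DecidableEq ι] {m n : ℕ} (h : m ∣ n)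
    {g : SpecialLinearGroup ι (ZMod n)}
    (hg : g ∈ (SpecialLinearGroup.map (ZMod.castHom h (ZMod m))).ker) :
    ∃ B : Matrix ι ι (ZMod n), (g : Matrix ι ι (ZMod n)) = 1 + (m : ZMod n) • B := by
  have hentry (a b : ι) :
      ∃ c : ZMod n, (g : Matrix ι ι (ZMod n)) a b - (1 : Matrix ι ι (ZMod n)) a b = m * c := by
    have hg1 := congrArg (fun g : SpecialLinearGroup ι (ZMod m) ↦ (g : Matrix ι ι (ZMod m)) a b)
      (MonoidHom.mem_ker.1 hg)
    refine ZMod.exists_eq_mul_of_castHom_eq_zero h ?_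
    simp only [map_apply_coe, RingHom.mapMatrix_apply, map_apply, coe_one] at hg1
    rw [map_sub, hg1, sub_eq_zero, one_apply, one_apply]
    split_ifs <;> simp only [map_one, map_zero]
  choose B hB using hentry
  exact ⟨of B, by ext a b; simp [← hB]⟩

theorem stmt9 (p : ℕ) (hp : p.Prime) (r : ℕ)
    {V : Type*} [AddCommGroup V] [Module ℂ V]
    (φ : Matrix.SpecialLinearGroup (Fin 4) (ZMod (p ^ r)) →*
      LinearMap.GeneralLinearGroup ℂ V)
    (hnew : ¬ (Matrix.SpecialLinearGroup.map (n := Fin 4)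
        (ZMod.castHom (pow_dvd_pow p (by omega : r - 1 ≤ r))
          (ZMod (p ^ (r - 1))))).ker ≤ φ.ker) :
    ∀ (i j : Fin 4) (h : i ≠ j), φ (elem p r i j h) ≠ 1 := by
  intro i j hij hφ
  refine hnew fun g hg ↦ ?_
  set q : ZMod (p ^ r) := (p : ZMod (p ^ r)) ^ (r - 1)
  have hφ' : SpecialLinearGroup.transvection hij q ∈ φ.ker := hφ
  have hN {a b : Fin 4} (hab : a ≠ b) (c : ZMod (p ^ r)) :
      SpecialLinearGroup.transvection hab (q * c) ∈ φ.ker :=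
    SpecialLinearGroup.transvection_mul_mem_of_three_le_card (by simp) hij hφ' hab c
  obtain rfl | hr := eq_or_ne r 1
  · have : Fact (p ^ 1).Prime := ⟨by rwa [pow_one]⟩
    have hq : q = 1 := by simp [q]
    rw [SpecialLinearGroup.eq_top_of_forall_transvection_mem (N := φ.ker) fun a b hab c ↦ by
      simpa only [hq, one_mul] using hN hab c]
    trivial
  · have hq : q * q = 0 := by
      rw [← pow_add, ← Nat.cast_pow, ZMod.natCast_eq_zero_iff]
      exact pow_dvd_pow p (by omega)
    obtain ⟨B, hB⟩ := SpecialLinearGroup.exists_coe_eq_one_add_smul_of_mem_ker_map_castHom _ hg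
    exact SpecialLinearGroup.mem_of_coe_eq_one_add_smul_s9 hq (fun a b hab ↦ hN hab)
      (by simpa using hB)
end

section
/- Let p be a prime, r ≥ 1, and let φ be a unitary representation of SL₄(ℤ/p^rℤ) on a finite-dimensional complex inner product space V. Suppose there exists a nonzero vector v ∈ V such that for all integers x, y, z, φ([x;y;z]) v = exp(2πi y/p^r) · v. Then there exists a nonzero vector w ∈ V fixed by φ(g) for every g ∈ G₂, where G₂ is the subgroup of SL₄(ℤ/p^rℤ) consisting of matrices with 1 in positions (1,1) and (4,4), an arbitrary SL₂(ℤ/p^rℤ) block in rows and columns 2, 3, and 0 in all other off-diagonal positions. -/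
open Matrix

/-- The matrix `[x;y;z]` in SL₄(ℤ/p^r): the identity except for entries
`x, z, y` in positions (2,3), (2,4), (3,4) (1-indexed). -/
def xyzMat (p r : ℕ) (x y z : ℤ) :
    Matrix.SpecialLinearGroup (Fin 4) (ZMod (p ^ r)) :=
  ⟨!![1, 0, 0, 0; 0, 1, (x : ZMod (p ^ r)), (z : ZMod (p ^ r));
      0, 0, 1, (y : ZMod (p ^ r)); 0, 0, 0, 1], by
    simp [Matrix.det_succ_row_zero, Fin.sum_univ_succ]⟩

/-! Let `H` be the `SL₂` block. Conjugation by `g = (a b; c d) ∈ H` sends `[0;y;z]` to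
`[0; cz+dy; az+by]`, so `φ g v` is an eigenvector of the unitary `φ [0; cz+dy; az+by]` with
eigenvalue `e(y / p^r)`, whereas `v` has eigenvalue `e((cz+dy) / p^r)`. Eigenvectors of a unitary
for distinct eigenvalues are orthogonal, so `φ g v ⊥ v` unless `y ≡ cz+dy` for all `y, z`, i.e.
`c = 0, d = 1`; but then `g = [b;0;0]` fixes `v`. Hence every `⟪φ g v, v⟫` has nonnegative real
part, and `∑_{g ∈ H} φ g v` is an `H`-fixed vector whose inner product with `v` is at least
`‖v‖² > 0`. -/

open scoped InnerProductSpace ComplexConjugate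

section Unitary

variable {𝕜 V : Type*} [RCLike 𝕜] [NormedAddCommGroup V] [InnerProductSpace 𝕜 V]
  [CompleteSpace V]

theorem Unitary.inner_eq_zero_of_apply_eq_smul (U : unitary (V →L[𝕜] V)) {u v : V} {α β : 𝕜}
    (hu : (U : V →L[𝕜] V) u = α • u) (hv : (U : V →L[𝕜] V) v = β • v) (hαβ : α ≠ β) :
    ⟪u, v⟫_𝕜 = 0 := by
  rcases eq_or_ne u 0 with rfl | hu0
  · exact inner_zero_left _
  have hα : conj α * α = 1 := by
    have h := Unitary.norm_map U u
    rw [hu, norm_smul] at h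
    have : ‖α‖ = 1 := by simpa [hu0] using h
    rw [RCLike.conj_mul, this]
    simp
  have h := Unitary.inner_map_map U u v
  rw [hu, hv, inner_smul_left, inner_smul_right, ← mul_assoc] at h
  by_contra h0
  have hβ : conj α * β = 1 := by simpa [h0] using h
  exact hαβ (mul_left_cancel₀ (left_ne_zero_of_mul_eq_one hα) (hα.trans hβ.symm))

end Unitary

section Averaging

variable {𝕜 V : Type*} [RCLike 𝕜] [NormedAddCommGroup V] [InnerProductSpace 𝕜 V]

theorem exists_ne_zero_forall_apply_eq_of_re_inner_nonneg {G : Type*} [Group G] [Fintype G]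
    (ρ : G →* (V →L[𝕜] V)) {v : V} (hv : v ≠ 0)
    (hρv : ∀ g, 0 ≤ RCLike.re ⟪ρ g v, v⟫_𝕜) :
    ∃ w ≠ 0, ∀ g, ρ g w = w := by
  refine ⟨∑ g, ρ g v, ?_, fun g => ?_⟩
  · intro h0
    have hre : RCLike.re ⟪ρ 1 v, v⟫_𝕜 ≤ RCLike.re ⟪∑ g, ρ g v, v⟫_𝕜 := by
      rw [sum_inner, map_sum]
      exact Finset.single_le_sum (fun g _ => hρv g) (Finset.mem_univ 1)
    rw [h0, inner_zero_left, map_zero, map_one, one_apply_eq_self, inner_self_eq_norm_sq] at hre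
    exact hv (by simpa using hre)
  · simp_rw [map_sum, ← mul_apply_eq_comp, ← map_mul]
    exact Equiv.sum_comp (Equiv.mulLeft g) (fun h => ρ h v)

end Averaging

section SL2Block

variable {R : Type*} [CommRing R]

def sl2BlockMatrix (a b c d : R) : Matrix (Fin 4) (Fin 4) R :=
  !![1, 0, 0, 0; 0, a, b, 0; 0, c, d, 0; 0, 0, 0, 1]

theorem sl2BlockMatrix_mul (a b c d a' b' c' d' : R) :
    sl2BlockMatrix a b c d * sl2BlockMatrix a' b' c' d'
      = sl2BlockMatrix (a * a' + b * c') (a * b' + b * d') (c * a' + d * c') (c * b' + d * d') := by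
  ext i j
  fin_cases i <;> fin_cases j <;> simp [sl2BlockMatrix, Matrix.mul_apply, Fin.sum_univ_four]

theorem sl2BlockMatrix_one_zero_zero_one : sl2BlockMatrix (1 : R) 0 0 1 = 1 := by
  ext i j
  fin_cases i <;> fin_cases j <;> simp [sl2BlockMatrix]

theorem det_sl2BlockMatrix (a b c d : R) : (sl2BlockMatrix a b c d).det = a * d - b * c := by
  simp [sl2BlockMatrix, Matrix.det_succ_row_zero, Fin.sum_univ_succ]
  ring

variable (R) in
def sl2Block : Subgroup (Matrix.SpecialLinearGroup (Fin 4) R) where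
  carrier := {g | ∃ a b c d : R, (g : Matrix (Fin 4) (Fin 4) R) = sl2BlockMatrix a b c d}
  mul_mem' := by
    rintro g h ⟨a, b, c, d, hg⟩ ⟨a', b', c', d', hh⟩
    exact ⟨_, _, _, _, by rw [Matrix.SpecialLinearGroup.coe_mul, hg, hh, sl2BlockMatrix_mul]⟩
  one_mem' := ⟨1, 0, 0, 1, sl2BlockMatrix_one_zero_zero_one.symm⟩
  inv_mem' := by
    rintro g ⟨a, b, c, d, hg⟩
    have hdet : a * d - b * c = 1 := by rw [← det_sl2BlockMatrix, ← hg, g.2]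
    have hleft : sl2BlockMatrix d (-b) (-c) a * g = 1 := by
      rw [hg, sl2BlockMatrix_mul, ← sl2BlockMatrix_one_zero_zero_one, ← hdet]
      congr 1 <;> ring
    refine ⟨d, -b, -c, a, ?_⟩
    rw [Matrix.SpecialLinearGroup.coe_inv, ← Matrix.inv_eq_left_inv hleft, Matrix.inv_def, g.2,
      Ring.inverse_one, one_smul]

end SL2Block

theorem mul_xyzMat_zero_eq_xyzMat_mul {p r : ℕ}
    {g : Matrix.SpecialLinearGroup (Fin 4) (ZMod (p ^ r))} {a b c d : ℤ}
    (hg : (g : Matrix (Fin 4) (Fin 4) (ZMod (p ^ r))) = sl2BlockMatrix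
      (a : ZMod (p ^ r)) (b : ZMod (p ^ r)) (c : ZMod (p ^ r)) (d : ZMod (p ^ r))) (y z : ℤ) :
    g * xyzMat p r 0 y z = xyzMat p r 0 (c * z + d * y) (a * z + b * y) * g := by
  ext i j
  simp only [Matrix.SpecialLinearGroup.coe_mul, hg]
  fin_cases i <;> fin_cases j <;>
    simp [xyzMat, sl2BlockMatrix, Matrix.mul_apply, Fin.sum_univ_four]

section Character

variable {p r : ℕ} [NeZero (p ^ r)] {V : Type*} [NormedAddCommGroup V] [InnerProductSpace ℂ V]
  [CompleteSpace V] (φ : Matrix.SpecialLinearGroup (Fin 4) (ZMod (p ^ r)) →* unitary (V →L[ℂ] V))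
  {v : V}

theorem inner_apply_eq_zero_of_ne
    (hχ : ∀ x y z : ℤ,
      (φ (xyzMat p r x y z) : V →L[ℂ] V) v = ZMod.stdAddChar (y : ZMod (p ^ r)) • v)
    {g : Matrix.SpecialLinearGroup (Fin 4) (ZMod (p ^ r))} {a b c d : ℤ}
    (hg : (g : Matrix (Fin 4) (Fin 4) (ZMod (p ^ r))) = sl2BlockMatrix
      (a : ZMod (p ^ r)) (b : ZMod (p ^ r)) (c : ZMod (p ^ r)) (d : ZMod (p ^ r)))
    {y z : ℤ} (hyz : (y : ZMod (p ^ r)) ≠ ((c * z + d * y : ℤ) : ZMod (p ^ r))) :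
    ⟪(φ g : V →L[ℂ] V) v, v⟫_ℂ = 0 := by
  have hu : (φ (xyzMat p r 0 (c * z + d * y) (a * z + b * y)) : V →L[ℂ] V) ((φ g : V →L[ℂ] V) v)
      = ZMod.stdAddChar (y : ZMod (p ^ r)) • (φ g : V →L[ℂ] V) v := by
    rw [← mul_apply_eq_comp, ← Submonoid.coe_mul, ← map_mul, ← mul_xyzMat_zero_eq_xyzMat_mul hg,
      map_mul, Submonoid.coe_mul, mul_apply_eq_comp, hχ, map_smul]
  exact Unitary.inner_eq_zero_of_apply_eq_smul _ hu (hχ 0 _ _) (ZMod.injective_stdAddChar.ne hyz)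

theorem apply_eq_self_or_inner_eq_zero
    (hχ : ∀ x y z : ℤ,
      (φ (xyzMat p r x y z) : V →L[ℂ] V) v = ZMod.stdAddChar (y : ZMod (p ^ r)) • v)
    {g : Matrix.SpecialLinearGroup (Fin 4) (ZMod (p ^ r))} (hg : g ∈ sl2Block (ZMod (p ^ r))) :
    (φ g : V →L[ℂ] V) v = v ∨ ⟪(φ g : V →L[ℂ] V) v, v⟫_ℂ = 0 := by
  obtain ⟨a, b, c, d, hg⟩ := hg
  obtain ⟨a, rfl⟩ := ZMod.intCast_surjective a
  obtain ⟨b, rfl⟩ := ZMod.intCast_surjective b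
  obtain ⟨c, rfl⟩ := ZMod.intCast_surjective c
  obtain ⟨d, rfl⟩ := ZMod.intCast_surjective d
  by_cases hc : (c : ZMod (p ^ r)) = 0
  · by_cases hd : (d : ZMod (p ^ r)) = 1
    · have ha : (a : ZMod (p ^ r)) = 1 := by
        simpa [hc, hd] using (det_sl2BlockMatrix (a : ZMod (p ^ r)) b c d).symm.trans
          (hg ▸ g.2)
      have hgx : g = xyzMat p r b 0 0 := by
        ext i j
        rw [hg, ha, hc, hd]
        fin_cases i <;> fin_cases j <;> simp [xyzMat, sl2BlockMatrix]
      left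
      rw [hgx, hχ, Int.cast_zero, AddChar.map_zero_eq_one, one_smul]
    · exact .inr <| inner_apply_eq_zero_of_ne φ hχ hg (y := 1) (z := 0)
        (by simpa [hc] using Ne.symm hd)
  · exact .inr <| inner_apply_eq_zero_of_ne φ hχ hg (y := 0) (z := 1) (by simpa using Ne.symm hc)

end Character

theorem stmt12_general (p : ℕ) (hp : p.Prime) (r : ℕ)
    {V : Type*} [NormedAddCommGroup V] [InnerProductSpace ℂ V]
    [FiniteDimensional ℂ V]
    (φ : Matrix.SpecialLinearGroup (Fin 4) (ZMod (p ^ r)) →* unitary (V →L[ℂ] V))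
    (v : V) (hv : v ≠ 0)
    (hchar : ∀ x y z : ℤ,
      (φ (xyzMat p r x y z) : V →L[ℂ] V) v
        = Complex.exp (2 * Real.pi * Complex.I * ((y : ℂ) / (p : ℂ) ^ r)) • v) :
    ∃ w : V, w ≠ 0 ∧ ∀ g : Matrix.SpecialLinearGroup (Fin 4) (ZMod (p ^ r)),
      (∃ a b c d : ZMod (p ^ r),
        (g : Matrix (Fin 4) (Fin 4) (ZMod (p ^ r)))
          = !![1, 0, 0, 0; 0, a, b, 0; 0, c, d, 0; 0, 0, 0, 1]) →
      (φ g : V →L[ℂ] V) w = w := by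
  have : NeZero (p ^ r) := ⟨pow_ne_zero r hp.ne_zero⟩
  have hχ : ∀ x y z : ℤ,
      (φ (xyzMat p r x y z) : V →L[ℂ] V) v = ZMod.stdAddChar (y : ZMod (p ^ r)) • v := by
    intro x y z
    rw [hchar, ZMod.stdAddChar_coe, Nat.cast_pow, mul_div_assoc]
  have hre (g : sl2Block (ZMod (p ^ r))) : 0 ≤ RCLike.re ⟪(φ g : V →L[ℂ] V) v, v⟫_ℂ := by
    rcases apply_eq_self_or_inner_eq_zero φ hχ g.2 with h | h
    · rw [h]
      exact inner_self_nonneg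
    · simp [h]
  have := Fintype.ofFinite (sl2Block (ZMod (p ^ r)))
  obtain ⟨w, hw, hfix⟩ := exists_ne_zero_forall_apply_eq_of_re_inner_nonneg
    ((unitary (V →L[ℂ] V)).subtype.comp (φ.comp (sl2Block _).subtype)) hv hre
  exact ⟨w, hw, fun g hg => hfix ⟨g, hg⟩⟩

theorem stmt12 (p : ℕ) (hp : p.Prime) (r : ℕ) (hr : 1 ≤ r)
    {V : Type*} [NormedAddCommGroup V] [InnerProductSpace ℂ V]
    [FiniteDimensional ℂ V]
    (φ : Matrix.SpecialLinearGroup (Fin 4) (ZMod (p ^ r)) →* unitary (V →L[ℂ] V))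
    (v : V) (hv : v ≠ 0)
    (hchar : ∀ x y z : ℤ,
      (φ (xyzMat p r x y z) : V →L[ℂ] V) v
        = Complex.exp (2 * Real.pi * Complex.I * ((y : ℂ) / (p : ℂ) ^ r)) • v) :
    ∃ w : V, w ≠ 0 ∧ ∀ g : Matrix.SpecialLinearGroup (Fin 4) (ZMod (p ^ r)),
      (∃ a b c d : ZMod (p ^ r),
        (g : Matrix (Fin 4) (Fin 4) (ZMod (p ^ r)))
          = !![1, 0, 0, 0; 0, a, b, 0; 0, c, d, 0; 0, 0, 0, 1]) →
      (φ g : V →L[ℂ] V) w = w :=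
  stmt12_general p hp r φ v hv hchar
end

section
/- Let p be a prime, r ≥ 1, and let φ be a unitary representation of SL₄(ℤ/p^rℤ) on a finite-dimensional complex inner product space V. Suppose v ∈ V satisfies φ([x;y;z]) v = exp(2πi y/p^r) · v for all integers x, y, z. Let g ∈ SL₄(ℤ/p^rℤ) be the matrix with 1 in positions (1,1) and (4,4), entries a, b, c, d ∈ ℤ/p^rℤ in positions (2,2), (2,3), (3,2), (3,3) respectively (with ad − bc = 1), and 0 in all other off-diagonal positions. Then for all integers y, z, φ([0;y;z]) (φ(g)⁻¹ v) = exp(2πi( d̃ y + c̃ z)/p^r) · (φ(g)⁻¹ v), where c̃, d̃ ∈ {0,…,p^r−1} are the canonical integer representatives of c and d. -/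
open Matrix

theorem stmt13 (p : ℕ) (hp : p.Prime) (r : ℕ) (hr : 1 ≤ r)
    {V : Type*} [NormedAddCommGroup V] [InnerProductSpace ℂ V]
    [FiniteDimensional ℂ V]
    (φ : Matrix.SpecialLinearGroup (Fin 4) (ZMod (p ^ r)) →* unitary (V →L[ℂ] V))
    (v : V)
    (hchar : ∀ x y z : ℤ,
      (φ (xyzMat p r x y z) : V →L[ℂ] V) v
        = Complex.exp (2 * Real.pi * Complex.I * ((y : ℂ) / (p : ℂ) ^ r)) • v)
    (a b c d : ZMod (p ^ r))
    (g : Matrix.SpecialLinearGroup (Fin 4) (ZMod (p ^ r)))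
    (hg : (g : Matrix (Fin 4) (Fin 4) (ZMod (p ^ r)))
      = !![1, 0, 0, 0; 0, a, b, 0; 0, c, d, 0; 0, 0, 0, 1]) :
    ∀ y z : ℤ,
      (φ (xyzMat p r 0 y z) : V →L[ℂ] V) ((((φ g)⁻¹ : unitary (V →L[ℂ] V)) : V →L[ℂ] V) v)
        = Complex.exp (2 * Real.pi * Complex.I *
            (((d.val : ℂ) * y + (c.val : ℂ) * z) / (p : ℂ) ^ r))
          • ((((φ g)⁻¹ : unitary (V →L[ℂ] V)) : V →L[ℂ] V) v) := by
  intro y z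
  haveI : NeZero (p ^ r) := ⟨pow_ne_zero r hp.pos.ne'⟩
  set y' : ℤ := (d.val : ℤ) * y + (c.val : ℤ) * z with hy'
  set z' : ℤ := (a.val : ℤ) * z + (b.val : ℤ) * y with hz'
  have hcomm : g * xyzMat p r 0 y z = xyzMat p r 0 y' z' * g := by
    apply Subtype.ext
    rw [Matrix.SpecialLinearGroup.coe_mul, Matrix.SpecialLinearGroup.coe_mul, hg]
    ext i j
    fin_cases i <;> fin_cases j <;>
      simp [xyzMat, Matrix.mul_apply, Fin.sum_univ_succ, hy', hz'] <;>
      push_cast [ZMod.natCast_val, ZMod.cast_id] <;> ring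
  have hX : xyzMat p r 0 y z = g⁻¹ * xyzMat p r 0 y' z' * g := by
    rw [mul_assoc, ← hcomm, inv_mul_cancel_left]
  have hgv : (φ g : V →L[ℂ] V) ((((φ g)⁻¹ : unitary (V →L[ℂ] V)) : V →L[ℂ] V) v) = v := by
    have h1 : ((φ g : V →L[ℂ] V) * (((φ g)⁻¹ : unitary (V →L[ℂ] V)) : V →L[ℂ] V)) v = v := by
      rw [← MulMemClass.coe_mul, mul_inv_cancel, OneMemClass.coe_one,
        ContinuousLinearMap.one_apply]
    simpa [ContinuousLinearMap.mul_apply] using h1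
  have key := hchar 0 y' z'
  rw [hX, _root_.map_mul, _root_.map_mul, map_inv]
  simp only [MulMemClass.coe_mul, ContinuousLinearMap.mul_apply, hgv, key,
    ContinuousLinearMap.map_smul]
  congr 2
  push_cast [hy']
  ring
end

section
/- Let p be a prime, r ≥ 1, and let φ be a unitary representation of SL₄(ℤ/p^rℤ) on a finite-dimensional complex inner product space V. Suppose v ∈ V is nonzero and satisfies φ([x;y;z]) v = exp(2πi y/p^r) · v for all integers x, y, z. Let G₂ be the subgroup of SL₄(ℤ/p^rℤ) consisting of matrices with 1 in positions (1,1) and (4,4), an arbitrary SL₂(ℤ/p^rℤ) block in rows and columns 2, 3, and 0 in all other off-diagonal positions. Then the linear span of { φ(g) v : g ∈ G₂ } has dimension equal to |SL₂(ℤ/p^rℤ)| / p^r. -/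
open Matrix

/-!
Let `E : SL₂ → SL₄` be the block embedding and `T(u)`, `u ∈ (ℤ/p^r)²`, the abelian group of
matrices `[0; u₁; u₀]`. From `T(A u) E(A) = E(A) T(u)`, the vector `φ(E A) v` is a common
eigenvector of the `T(u)` with character `u ↦ e(ω(A e₀, u))`, where `e(t) = exp(2πi t / p^r)`
and `ω` is the standard symplectic form. Since `v` is fixed by `E` of the upper unipotent group,
which is the stabiliser of `e₀`, `φ(E A) v` only depends on the first column `A e₀`. Distinct
columns give distinct characters, hence linearly independent vectors, and the columns form the
orbit of `e₀`, of size `|SL₂| / |stabiliser| = |SL₂| / p^r`.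
-/

open Matrix.SpecialLinearGroup MulAction
open scoped MatrixGroups

section Orthogonality

variable {G K M ι : Type*} [AddCommGroup G] [Fintype G] [Field K]
  [AddCommGroup M] [Module K M]

theorem AddChar.sum_apply_mul_apply_neg [DecidableEq (AddChar G K)] (χ χ' : AddChar G K) :
    ∑ g, χ g * χ' (-g) = if χ = χ' then (Fintype.card G : K) else 0 := by
  simp_rw [← AddChar.sub_apply, AddChar.sum_eq_ite, sub_eq_zero]

theorem linearIndependent_of_addChar_eigenvectors [CharZero K] (ρ : G → Module.End K M)
    {χ : ι → AddChar G K} (hχ : Function.Injective χ) {w : ι → M} (hw : ∀ i, w i ≠ 0)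
    (hρw : ∀ g i, ρ g (w i) = χ i g • w i) : LinearIndependent K w := by
  classical
  rw [linearIndependent_iff']
  intro s c hsum i hi
  -- Averaging `ρ` against `χ i` kills the eigenvectors of all other characters.
  have hproj : ∀ j, ∑ g, χ i (-g) • ρ g (w j) =
      if j = i then (Fintype.card G : K) • w i else 0 := by
    intro j
    simp_rw [hρw, smul_smul, ← Finset.sum_smul, mul_comm (χ i _),
      AddChar.sum_apply_mul_apply_neg, hχ.eq_iff]
    split_ifs with h <;> simp [h]
  have : ∑ g, χ i (-g) • ρ g (∑ j ∈ s, c j • w j) = c i • (Fintype.card G : K) • w i := by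
    simp_rw [map_sum, map_smul, Finset.smul_sum, smul_comm (χ i _) (c _)]
    rw [Finset.sum_comm]
    simp_rw [← Finset.smul_sum, hproj, smul_ite, smul_zero, Finset.sum_ite_eq' s i, if_pos hi]
  simpa [hsum, hw i] using this.symm

end Orthogonality

section SL2

variable {R : Type*} [CommRing R]

lemma SL2_smul_apply (A : SL(2, R)) (u : Fin 2 → R) (i : Fin 2) :
    (A • u) i = A i 0 * u 0 + A i 1 * u 1 := by
  change (A.1 *ᵥ u) i = _
  simp [mulVec, dotProduct, Fin.sum_univ_two]

def symplecticPairing (x : Fin 2 → R) : (Fin 2 → R) →+ R where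
  toFun u := x 0 * u 1 - x 1 * u 0
  map_zero' := by simp
  map_add' u u' := by simp only [Pi.add_apply]; ring

lemma symplecticPairing_apply (x u : Fin 2 → R) :
    symplecticPairing x u = x 0 * u 1 - x 1 * u 0 := rfl

lemma symplecticPairing_smul_smul (A : SL(2, R)) (x u : Fin 2 → R) :
    symplecticPairing (A • x) (A • u) = symplecticPairing x u := by
  have hA := A.2
  rw [det_fin_two] at hA
  simp only [symplecticPairing_apply, SL2_smul_apply]
  linear_combination (x 0 * u 1 - x 1 * u 0) * hA

lemma injective_addChar_compAddMonoidHom_symplecticPairing {K : Type*} [CommMonoid K]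
    {ψ : AddChar R K} (hψ : ψ.IsPrimitive) :
    Function.Injective fun x : Fin 2 → R => ψ.compAddMonoidHom (symplecticPairing x) := by
  intro x x' h
  have hx (i : Fin 2) (t : R) : ψ (symplecticPairing x (Pi.single i t)) =
      ψ (symplecticPairing x' (Pi.single i t)) := DFunLike.congr_fun h _
  have h0 : ψ.mulShift (x 0) = ψ.mulShift (x' 0) := by
    ext t; simpa [symplecticPairing_apply, AddChar.mulShift_apply] using hx 1 t
  have h1 : ψ.mulShift (-x 1) = ψ.mulShift (-x' 1) := by
    ext t; simpa [symplecticPairing_apply, AddChar.mulShift_apply] using hx 0 t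
  ext i
  fin_cases i
  · exact AddChar.to_mulShift_inj_of_isPrimitive hψ h0
  · exact neg_injective (AddChar.to_mulShift_inj_of_isPrimitive hψ h1)

lemma eq_transvection_of_smul_single_zero {A : SL(2, R)}
    (hA : A • (Pi.single 0 1 : Fin 2 → R) = Pi.single 0 1) :
    A = transvection zero_ne_one (A 0 1) := by
  have h00 := congrFun hA 0
  have h10 := congrFun hA 1
  simp only [SL2_smul_apply] at h00 h10
  simp at h00 h10
  have h11 : A 1 1 = 1 := by
    have hdet := A.2
    rw [det_fin_two, h00, h10] at hdet
    linear_combination hdet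
  ext i j
  fin_cases i <;> fin_cases j <;> simp [transvection_coe, h00, h10, h11]

lemma card_stabilizer_single_zero [Finite R] :
    Nat.card (stabilizer SL(2, R) (Pi.single 0 1 : Fin 2 → R)) = Nat.card R :=
  Nat.card_congr
    { toFun A := A.1 0 1
      invFun t := ⟨transvection zero_ne_one t, transvection_smul_single_fst _ t⟩
      left_inv A := Subtype.ext (eq_transvection_of_smul_single_zero A.2).symm
      right_inv t := by simp [transvection_coe] }

end SL2

section Embedding

variable {R : Type*} [CommRing R]

def embedSL2 : SL(2, R) →* SL(4, R) where
  toFun A := ⟨!![1, 0, 0, 0; 0, A 0 0, A 0 1, 0; 0, A 1 0, A 1 1, 0; 0, 0, 0, 1], by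
    have hA := A.2
    rw [det_fin_two] at hA
    simp [det_succ_row_zero, Fin.sum_univ_succ]
    linear_combination hA⟩
  map_one' := by ext i j; fin_cases i <;> fin_cases j <;> rfl
  map_mul' A B := by
    ext i j
    change _ = (_ * _ : Matrix (Fin 4) (Fin 4) R) i j
    fin_cases i <;> fin_cases j <;> simp [mul_apply, Fin.sum_univ_succ]

lemma coe_embedSL2 (A : SL(2, R)) :
    (embedSL2 A : Matrix (Fin 4) (Fin 4) R) =
      !![1, 0, 0, 0; 0, A 0 0, A 0 1, 0; 0, A 1 0, A 1 1, 0; 0, 0, 0, 1] := rfl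

lemma exists_embedSL2_eq_iff (g : SL(4, R)) :
    (∃ A : SL(2, R), embedSL2 A = g) ↔ ∃ a b c d : R,
      (g : Matrix (Fin 4) (Fin 4) R) = !![1, 0, 0, 0; 0, a, b, 0; 0, c, d, 0; 0, 0, 0, 1] := by
  constructor
  · rintro ⟨A, rfl⟩
    exact ⟨A 0 0, A 0 1, A 1 0, A 1 1, rfl⟩
  · rintro ⟨a, b, c, d, hg⟩
    have hdet : det !![a, b; c, d] = 1 := by
      have hg' := g.2
      rw [hg] at hg'
      simp [det_succ_row_zero, Fin.sum_univ_succ] at hg'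
      rw [det_fin_two_of]
      linear_combination hg'
    refine ⟨⟨!![a, b; c, d], hdet⟩, Subtype.ext ?_⟩
    exact hg.symm ▸ by ext i j; fin_cases i <;> fin_cases j <;> rfl

def lastColumnShear (u : Fin 2 → R) : SL(4, R) :=
  ⟨!![1, 0, 0, 0; 0, 1, 0, u 0; 0, 0, 1, u 1; 0, 0, 0, 1], by
    simp [det_succ_row_zero, Fin.sum_univ_succ]⟩

lemma lastColumnShear_smul_mul_embedSL2 (A : SL(2, R)) (u : Fin 2 → R) :
    lastColumnShear (A • u) * embedSL2 A = embedSL2 A * lastColumnShear u := by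
  ext i j
  change (_ * _ : Matrix (Fin 4) (Fin 4) R) i j = (_ * _ : Matrix (Fin 4) (Fin 4) R) i j
  fin_cases i <;> fin_cases j <;>
    simp [lastColumnShear, coe_embedSL2, SL2_smul_apply, mul_apply, Fin.sum_univ_succ]

lemma setOf_exists_block_eq_range_embedSL2 {X : Type*} (f : SL(4, R) → X) :
    {x | ∃ g : SL(4, R), (∃ a b c d : R,
      (g : Matrix (Fin 4) (Fin 4) R) = !![1, 0, 0, 0; 0, a, b, 0; 0, c, d, 0; 0, 0, 0, 1]) ∧
        x = f g} = Set.range fun A => f (embedSL2 A) := by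
  ext x
  simp only [← exists_embedSL2_eq_iff, Set.mem_ofPred_eq, Set.mem_range]
  constructor
  · rintro ⟨_, ⟨A, rfl⟩, rfl⟩
    exact ⟨A, rfl⟩
  · rintro ⟨A, rfl⟩
    exact ⟨_, ⟨A, rfl⟩, rfl⟩

end Embedding

section Representation

variable {R K M : Type*} [CommRing R] [Field K] [AddCommGroup M] [Module K M]
  (ρ : SL(4, R) →* Module.End K M) (ψ : AddChar R K) {v : M}

lemma map_lastColumnShear_map_embedSL2 (hshear : ∀ u, ρ (lastColumnShear u) v = ψ (u 1) • v)
    (A : SL(2, R)) (u : Fin 2 → R) :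
    ρ (lastColumnShear u) (ρ (embedSL2 A) v) =
      ψ (symplecticPairing (A • Pi.single 0 1) u) • ρ (embedSL2 A) v := by
  -- `ω(A e₀, u) = ω(e₀, A⁻¹ u) = (A⁻¹ u)₁` by the `SL₂`-invariance of `ω`.
  have hpair : symplecticPairing (A • Pi.single 0 1) u = (A⁻¹ • u) 1 := by
    conv_lhs => rw [← smul_inv_smul A u, symplecticPairing_smul_smul]
    simp [symplecticPairing_apply]
  rw [hpair, ← Module.End.mul_apply, ← map_mul]
  conv_lhs => rw [← smul_inv_smul A u, lastColumnShear_smul_mul_embedSL2, map_mul,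
    Module.End.mul_apply, hshear, map_smul]

lemma map_embedSL2_eq_of_smul_eq
    (hfix : ∀ t, ρ (embedSL2 (transvection zero_ne_one t)) v = v) {A B : SL(2, R)}
    (hAB : A • (Pi.single 0 1 : Fin 2 → R) = B • Pi.single 0 1) :
    ρ (embedSL2 A) v = ρ (embedSL2 B) v := by
  have hstab : (B⁻¹ * A) • (Pi.single 0 1 : Fin 2 → R) = Pi.single 0 1 := by
    rw [mul_smul, hAB, inv_smul_smul]
  rw [← mul_inv_cancel_left B A, map_mul, map_mul, Module.End.mul_apply,
    eq_transvection_of_smul_single_zero hstab, hfix]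

theorem finrank_span_range_map_embedSL2 [Fintype R] [CharZero K] (hψ : ψ.IsPrimitive)
    (hv : v ≠ 0) (hshear : ∀ u, ρ (lastColumnShear u) v = ψ (u 1) • v)
    (hfix : ∀ t, ρ (embedSL2 (transvection zero_ne_one t)) v = v) :
    Module.finrank K (Submodule.span K (Set.range fun A : SL(2, R) => ρ (embedSL2 A) v)) =
      Nat.card SL(2, R) / Nat.card R := by
  classical
  set e₀ : Fin 2 → R := Pi.single 0 1
  have hrep (x : orbit SL(2, R) e₀) : ∃ A : SL(2, R), A • e₀ = x := mem_orbit_iff.1 x.2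
  choose rep hrep using hrep
  set w : orbit SL(2, R) e₀ → M := fun x => ρ (embedSL2 (rep x)) v
  have hrange : Set.range w = Set.range fun A : SL(2, R) => ρ (embedSL2 A) v := by
    refine subset_antisymm (Set.range_subset_iff.2 fun x => ⟨rep x, rfl⟩) ?_
    rintro _ ⟨A, rfl⟩
    exact ⟨⟨A • e₀, mem_orbit e₀ A⟩, map_embedSL2_eq_of_smul_eq ρ hfix (hrep _)⟩
  have hw (x) : w x ≠ 0 := fun h => hv <| by
    simpa [w, ← Module.End.mul_apply, ← map_mul] using congrArg (ρ (embedSL2 (rep x))⁻¹) h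
  have hli : LinearIndependent K w :=
    linearIndependent_of_addChar_eigenvectors (fun u => ρ (lastColumnShear u))
      ((injective_addChar_compAddMonoidHom_symplecticPairing hψ).comp Subtype.val_injective) hw
      fun u x => by
        change _ = ψ (symplecticPairing x u) • _
        rw [← hrep x]
        exact map_lastColumnShear_map_embedSL2 ρ ψ hshear (rep x) u
  rw [← hrange, finrank_span_eq_card hli, ← Nat.card_eq_fintype_card, Nat.card_coe_set_eq,
    ← index_stabilizer, ← card_stabilizer_single_zero (R := R),
    ← (stabilizer SL(2, R) e₀).card_mul_index, Nat.mul_div_cancel_left _ Nat.card_pos]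

end Representation

lemma xyzMat_zero_eq_lastColumnShear (p r : ℕ) (y z : ℤ) :
    xyzMat p r 0 y z = lastColumnShear ![(z : ZMod (p ^ r)), y] := by
  ext i j
  fin_cases i <;> fin_cases j <;> simp [xyzMat, lastColumnShear]

lemma xyzMat_eq_embedSL2_transvection (p r : ℕ) (x : ℤ) :
    xyzMat p r x 0 0 = embedSL2 (transvection zero_ne_one (x : ZMod (p ^ r))) := by
  ext i j
  fin_cases i <;> fin_cases j <;> simp [xyzMat, coe_embedSL2, transvection_coe]

lemma exp_eq_stdAddChar_intCast (p r : ℕ) [NeZero (p ^ r)] (y : ℤ) :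
    Complex.exp (2 * Real.pi * Complex.I * ((y : ℂ) / (p : ℂ) ^ r)) =
      ZMod.stdAddChar (y : ZMod (p ^ r)) := by
  rw [ZMod.stdAddChar_coe]
  push_cast
  ring_nf

theorem stmt14_general (p : ℕ) (hp : p.Prime) (r : ℕ)
    {V : Type*} [NormedAddCommGroup V] [InnerProductSpace ℂ V]
    [FiniteDimensional ℂ V]
    (φ : Matrix.SpecialLinearGroup (Fin 4) (ZMod (p ^ r)) →* unitary (V →L[ℂ] V))
    (v : V) (hv : v ≠ 0)
    (hchar : ∀ x y z : ℤ,
      (φ (xyzMat p r x y z) : V →L[ℂ] V) v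
        = Complex.exp (2 * Real.pi * Complex.I * ((y : ℂ) / (p : ℂ) ^ r)) • v) :
    Module.finrank ℂ
      (Submodule.span ℂ {w : V | ∃ g : Matrix.SpecialLinearGroup (Fin 4) (ZMod (p ^ r)),
        (∃ a b c d : ZMod (p ^ r),
          (g : Matrix (Fin 4) (Fin 4) (ZMod (p ^ r)))
            = !![1, 0, 0, 0; 0, a, b, 0; 0, c, d, 0; 0, 0, 0, 1])
        ∧ w = (φ g : V →L[ℂ] V) v})
    = Nat.card (Matrix.SpecialLinearGroup (Fin 2) (ZMod (p ^ r))) / p ^ r := by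
  have : NeZero (p ^ r) := ⟨pow_ne_zero r hp.ne_zero⟩
  set ρ : SL(4, ZMod (p ^ r)) →* Module.End ℂ V :=
    ContinuousLinearMap.toLinearMapRingHom.toMonoidHom.comp ((unitary (V →L[ℂ] V)).subtype.comp φ)
  have hρ (g : SL(4, ZMod (p ^ r))) (w : V) : ρ g w = (φ g : V →L[ℂ] V) w := rfl
  have hshear (u : Fin 2 → ZMod (p ^ r)) :
      ρ (lastColumnShear u) v = ZMod.stdAddChar (u 1) • v := by
    obtain ⟨z, y, rfl⟩ : ∃ z y : ℤ, u = ![(z : ZMod (p ^ r)), y] :=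
      ⟨(u 0).cast, (u 1).cast, by ext i; fin_cases i <;> simp⟩
    simpa [hρ, ← xyzMat_zero_eq_lastColumnShear, exp_eq_stdAddChar_intCast] using hchar 0 y z
  have hfix (t : ZMod (p ^ r)) : ρ (embedSL2 (transvection zero_ne_one t)) v = v := by
    obtain ⟨x, rfl⟩ : ∃ x : ℤ, t = x := ⟨t.cast, (ZMod.intCast_zmod_cast t).symm⟩
    simpa [hρ, ← xyzMat_eq_embedSL2_transvection] using hchar x 0 0
  have h := finrank_span_range_map_embedSL2 ρ _ (ZMod.isPrimitive_stdAddChar _) hv hshear hfix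
  rw [Nat.card_zmod] at h
  rw [setOf_exists_block_eq_range_embedSL2]
  exact h

theorem stmt14 (p : ℕ) (hp : p.Prime) (r : ℕ) (hr : 1 ≤ r)
    {V : Type*} [NormedAddCommGroup V] [InnerProductSpace ℂ V]
    [FiniteDimensional ℂ V]
    (φ : Matrix.SpecialLinearGroup (Fin 4) (ZMod (p ^ r)) →* unitary (V →L[ℂ] V))
    (v : V) (hv : v ≠ 0)
    (hchar : ∀ x y z : ℤ,
      (φ (xyzMat p r x y z) : V →L[ℂ] V) v
        = Complex.exp (2 * Real.pi * Complex.I * ((y : ℂ) / (p : ℂ) ^ r)) • v) :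
    Module.finrank ℂ
      (Submodule.span ℂ {w : V | ∃ g : Matrix.SpecialLinearGroup (Fin 4) (ZMod (p ^ r)),
        (∃ a b c d : ZMod (p ^ r),
          (g : Matrix (Fin 4) (Fin 4) (ZMod (p ^ r)))
            = !![1, 0, 0, 0; 0, a, b, 0; 0, c, d, 0; 0, 0, 0, 1])
        ∧ w = (φ g : V →L[ℂ] V) v})
    = Nat.card (Matrix.SpecialLinearGroup (Fin 2) (ZMod (p ^ r))) / p ^ r :=
  stmt14_general p hp r φ v hv hchar
end
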